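/- For all n ≥ 0 and p, q ≥ 1, n! · |GSCM_n(p,q)| = ∏_{i=1}^n (2pq + p + q + i), where |GSCM_n(p,q)| is the sum of the cardinalities of the four sets GSCM_n^{λ,μ}(p,q) for λ,μ ∈ {0,1}. -/

import Mathlib

/-- Generalized signed contingency matrices of type `(0,0)`: `p × q` matrices of signed numbers
`(a⁺, a⁻)` with total absolute value `n`. -/
def GSCM00 (n p q : ℕ) : Set (Matrix (Fin p) (Fin q) (ℕ × ℕ)) :=
  {A | ∑ i, ∑ j, ((A i j).1 + (A i j).2) = n}

/-- Generalized signed contingency matrices of type `(1,0)`: `(p+1) × q` matrices of signed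
numbers with total absolute value `n`, whose last row has vanishing negative parts and
positive total positive part. -/
def GSCM10 (n p q : ℕ) : Set (Matrix (Fin (p + 1)) (Fin q) (ℕ × ℕ)) :=
  {A | (∑ i, ∑ j, ((A i j).1 + (A i j).2) = n) ∧
       (∀ j, (A (Fin.last p) j).2 = 0) ∧ 0 < ∑ j, (A (Fin.last p) j).1}

/-- Generalized signed contingency matrices of type `(0,1)`: `p × (q+1)` matrices of signed
numbers with total absolute value `n`, whose last column has vanishing negative parts and
positive total positive part. -/
def GSCM01 (n p q : ℕ) : Set (Matrix (Fin p) (Fin (q + 1)) (ℕ × ℕ)) :=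
  {A | (∑ i, ∑ j, ((A i j).1 + (A i j).2) = n) ∧
       (∀ i, (A i (Fin.last q)).2 = 0) ∧ 0 < ∑ i, (A i (Fin.last q)).1}

/-- Generalized signed contingency matrices of type `(1,1)`: `(p+1) × (q+1)` matrices of signed
numbers with total absolute value `n`, whose last row and last column have vanishing negative
parts and positive total positive parts. -/
def GSCM11 (n p q : ℕ) : Set (Matrix (Fin (p + 1)) (Fin (q + 1)) (ℕ × ℕ)) :=
  {A | (∑ i, ∑ j, ((A i j).1 + (A i j).2) = n) ∧
       (∀ j, (A (Fin.last p) j).2 = 0) ∧ (∀ i, (A i (Fin.last q)).2 = 0) ∧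
       0 < ∑ j, (A (Fin.last p) j).1 ∧ 0 < ∑ i, (A i (Fin.last q)).1}

/-- `|GSCM_n(p,q)|`, the total number of generalized signed contingency matrices. -/
noncomputable def GSCMcard (n p q : ℕ) : ℕ :=
  Nat.card (GSCM00 n p q) + Nat.card (GSCM10 n p q) +
    Nat.card (GSCM01 n p q) + Nat.card (GSCM11 n p q)

/-! ### Auxiliary counting machinery -/

open Finset

section gadgets
variable {ι σ τ : Type*}

/-- Functions with fixed sum are equivalent to `Sym`. -/
noncomputable def fsEquivSym (ι : Type*) [Fintype ι] [DecidableEq ι] (n : ℕ) :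
    {f : ι → ℕ // ∑ i, f i = n} ≃ Sym ι n := by
  refine Equiv.subtypeEquiv (Finsupp.equivFunOnFinite.symm.trans Multiset.toFinsupp.symm.toEquiv)
    (fun f => ?_)
  simp only [Equiv.trans_apply, AddEquiv.toEquiv_symm, AddEquiv.coe_toEquiv]
  rw [show (Multiset.toFinsupp.symm.toEquiv (Finsupp.equivFunOnFinite.symm f) : Multiset ι)
      = Finsupp.toMultiset (Finsupp.equivFunOnFinite.symm f) from rfl]
  rw [Finsupp.card_toMultiset, Finsupp.sum_fintype]
  · exact Iff.rfl
  · intro; rfl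

lemma finite_fs (ι : Type*) [Fintype ι] (n : ℕ) : Finite {f : ι → ℕ // ∑ i, f i = n} := by
  classical
  exact Finite.of_equiv _ (fsEquivSym ι n).symm

lemma card_fs (ι : Type*) [Fintype ι] (n : ℕ) :
    Nat.card {f : ι → ℕ // ∑ i, f i = n} = Nat.multichoose (Fintype.card ι) n := by
  classical
  rw [Nat.card_congr (fsEquivSym ι n), Nat.card_eq_fintype_card, Sym.card_sym_eq_multichoose]

lemma card_split {α : Type*} (P Q : α → Prop) [Finite {x // P x}] :
    Nat.card {x // P x} = Nat.card {x : α // P x ∧ Q x} + Nat.card {x : α // P x ∧ ¬ Q x} := by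
  classical
  haveI : Finite {x : α // P x ∧ Q x} :=
    Finite.of_injective (fun y => (⟨y.1, y.2.1⟩ : {x // P x}))
      (fun a b h => by simpa [Subtype.ext_iff] using h)
  haveI : Finite {x : α // P x ∧ ¬ Q x} :=
    Finite.of_injective (fun y => (⟨y.1, y.2.1⟩ : {x // P x}))
      (fun a b h => by simpa [Subtype.ext_iff] using h)
  have e : {x : α // P x ∧ Q x} ⊕ {x : α // P x ∧ ¬ Q x} ≃ {x // P x} :=
    (Equiv.sumCongr (Equiv.subtypeSubtypeEquivSubtypeInter P Q).symm
      (Equiv.subtypeSubtypeEquivSubtypeInter P (fun x => ¬ Q x)).symm).trans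
      (Equiv.sumCompl (fun x : {x // P x} => Q x.1))
  rw [← Nat.card_congr e, Nat.card_sum]

/-- Dropping an identically-zero right component. -/
def zeroDrop (σ τ : Type*) [Fintype σ] [Fintype τ] (n : ℕ) :
    {f : σ ⊕ τ → ℕ // (∑ x, f x = n) ∧ (∑ y, f (Sum.inr y) = 0)} ≃
      {g : σ → ℕ // ∑ x, g x = n} where
  toFun f := ⟨fun a => f.1 (Sum.inl a), by
    have := f.2.1
    rwa [Fintype.sum_sum_type, f.2.2, add_zero] at this⟩
  invFun g := ⟨Sum.elim g.1 0, by simp [Fintype.sum_sum_type, g.2]⟩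
  left_inv f := by
    ext x
    cases x with
    | inl a => rfl
    | inr y =>
      simp only [Sum.elim_inr, Pi.zero_apply]
      exact (Finset.sum_eq_zero_iff.mp f.2.2 y (mem_univ y)).symm
  right_inv g := rfl

/-- Counting functions with fixed sum whose right part is positive. -/
lemma card_pos_part (σ τ : Type*) [Fintype σ] [Fintype τ] (n : ℕ) :
    Nat.card {f : σ ⊕ τ → ℕ // (∑ x, f x = n) ∧ 0 < ∑ y, f (Sum.inr y)}
      + Nat.multichoose (Fintype.card σ) n
      = Nat.multichoose (Fintype.card σ + Fintype.card τ) n := by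
  classical
  haveI := finite_fs (σ ⊕ τ) n
  have h := card_split (fun f : σ ⊕ τ → ℕ => ∑ x, f x = n)
    (fun f => 0 < ∑ y, f (Sum.inr y))
  rw [card_fs, Fintype.card_sum] at h
  have e2 : {f : σ ⊕ τ → ℕ // (∑ x, f x = n) ∧ ¬ 0 < ∑ y, f (Sum.inr y)} ≃
      {g : σ → ℕ // ∑ x, g x = n} :=
    (Equiv.subtypeEquivRight (fun f => by simp [Nat.pos_iff_ne_zero])).trans (zeroDrop σ τ n)
  have h2 : Nat.card {f : σ ⊕ τ → ℕ // (∑ x, f x = n) ∧ ¬ 0 < ∑ y, f (Sum.inr y)}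
      = Nat.multichoose (Fintype.card σ) n :=
    (Nat.card_congr e2).trans (card_fs σ n)
  rw [← h2, h]
end gadgets

/-! ### The four GSCM classes as function classes -/

/-- `GSCM00` as functions with fixed sum. -/
def e00 (n p q : ℕ) : GSCM00 n p q ≃
    {f : (Fin p × Fin q) × Bool → ℕ // ∑ x, f x = n} where
  toFun A := ⟨fun x => if x.2 then (A.1 x.1.1 x.1.2).1 else (A.1 x.1.1 x.1.2).2, by
    have hA : ∑ i, ∑ j, ((A.1 i j).1 + (A.1 i j).2) = n := A.2
    rw [Fintype.sum_prod_type]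
    simpa [Fintype.sum_prod_type, add_comm] using hA⟩
  invFun f := ⟨fun i j => (f.1 ((i,j), true), f.1 ((i,j), false)), by
    have hf := f.2
    rw [Fintype.sum_prod_type] at hf
    show ∑ i, ∑ j, (f.1 ((i,j), true) + f.1 ((i,j), false)) = n
    simpa [GSCM00, Set.mem_setOf_eq, Fintype.sum_prod_type, add_comm] using hf⟩
  left_inv A := by
    apply Subtype.ext
    funext i j
    simp
  right_inv f := by
    apply Subtype.ext
    funext ⟨⟨i, j⟩, b⟩
    cases b <;> simp

/-- `GSCM10` as functions with fixed sum and positive last part. -/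
def e10 (n p q : ℕ) : GSCM10 n p q ≃
    {f : ((Fin p × Fin q) × Bool) ⊕ Fin q → ℕ //
      (∑ x, f x = n) ∧ 0 < ∑ j, f (Sum.inr j)} where
  toFun A := ⟨Sum.elim
      (fun x => if x.2 then (A.1 x.1.1.castSucc x.1.2).1 else (A.1 x.1.1.castSucc x.1.2).2)
      (fun j => (A.1 (Fin.last p) j).1), by
    obtain ⟨hs, hz, hpos⟩ := A.2
    constructor
    · rw [Fintype.sum_sum_type, Fintype.sum_prod_type]
      rw [Fin.sum_univ_castSucc] at hs
      have hlast : ∑ j, ((A.1 (Fin.last p) j).1 + (A.1 (Fin.last p) j).2)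
          = ∑ j, (A.1 (Fin.last p) j).1 := by
        refine Finset.sum_congr rfl fun j _ => by rw [hz j, add_zero]
      rw [hlast] at hs
      simpa [Fintype.sum_prod_type, add_comm] using hs
    · simpa using hpos⟩
  invFun f := ⟨fun i => Fin.lastCases
      (fun j => (f.1 (Sum.inr j), 0))
      (fun i' j => (f.1 (Sum.inl ((i', j), true)), f.1 (Sum.inl ((i', j), false)))) i, by
    obtain ⟨hs, hpos⟩ := f.2
    refine ⟨?_, fun j => by simp, by simpa using hpos⟩
    rw [Fin.sum_univ_castSucc]
    rw [Fintype.sum_sum_type, Fintype.sum_prod_type] at hs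
    simpa [Fintype.sum_prod_type, add_comm] using hs⟩
  left_inv A := by
    apply Subtype.ext
    funext i j
    induction i using Fin.lastCases with
    | last =>
      simp only [Fin.lastCases_last]
      exact Prod.ext rfl (A.2.2.1 j).symm
    | cast i' => simp
  right_inv f := by
    apply Subtype.ext
    funext x
    rcases x with ⟨⟨i, j⟩, b⟩ | j
    · cases b <;> simp
    · simp

/-- Transposing relates `GSCM01` and `GSCM10`. -/
def e01 (n p q : ℕ) : GSCM01 n p q ≃ GSCM10 n q p where
  toFun A := ⟨fun j i => A.1 i j, by
    obtain ⟨hs, hz, hpos⟩ := A.2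
    exact ⟨by rw [Finset.sum_comm]; exact hs, hz, hpos⟩⟩
  invFun B := ⟨fun i j => B.1 j i, by
    obtain ⟨hs, hz, hpos⟩ := B.2
    exact ⟨by rw [Finset.sum_comm]; exact hs, hz, hpos⟩⟩
  left_inv A := rfl
  right_inv B := rfl

set_option maxHeartbeats 2000000 in
/-- `GSCM11` as functions with fixed sum and two positivity conditions. -/
def e11 (n p q : ℕ) : GSCM11 n p q ≃
    {f : (((Fin p × Fin q) × Bool) ⊕ Fin p) ⊕ (Fin q ⊕ Unit) → ℕ //
      (∑ x, f x = n) ∧ (0 < ∑ y, f (Sum.inr y)) ∧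
      (0 < (∑ i, f (Sum.inl (Sum.inr i))) + f (Sum.inr (Sum.inr ())))} where
  toFun A := ⟨Sum.elim
      (Sum.elim
        (fun x => if x.2 then (A.1 x.1.1.castSucc x.1.2.castSucc).1
          else (A.1 x.1.1.castSucc x.1.2.castSucc).2)
        (fun i => (A.1 i.castSucc (Fin.last q)).1))
      (Sum.elim (fun j => (A.1 (Fin.last p) j.castSucc).1)
        (fun _ => (A.1 (Fin.last p) (Fin.last q)).1)), by
    obtain ⟨hs, hz1, hz2, hr, hc⟩ := A.2
    refine ⟨?_, ?_, ?_⟩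
    · simp only [Fin.sum_univ_castSucc] at hs
      simp only [hz1, hz2, add_zero] at hs
      rw [Fintype.sum_sum_type, Fintype.sum_sum_type, Fintype.sum_sum_type,
        Fintype.sum_prod_type]
      simpa [Fintype.sum_prod_type, Finset.sum_add_distrib, add_comm, add_assoc,
        add_left_comm] using hs
    · rw [Fin.sum_univ_castSucc] at hr
      simpa [Fintype.sum_sum_type] using hr
    · rw [Fin.sum_univ_castSucc] at hc
      simpa using hc⟩
  invFun f := ⟨fun i => Fin.lastCases
      (fun j => Fin.lastCases ((f.1 (Sum.inr (Sum.inr ())), 0))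
        (fun j' => (f.1 (Sum.inr (Sum.inl j')), 0)) j)
      (fun i' j => Fin.lastCases ((f.1 (Sum.inl (Sum.inr i')), 0))
        (fun j' => (f.1 (Sum.inl (Sum.inl ((i', j'), true))),
          f.1 (Sum.inl (Sum.inl ((i', j'), false))))) j) i, by
    obtain ⟨hs, hr, hc⟩ := f.2
    refine ⟨?_, ?_, ?_, ?_, ?_⟩
    · simp only [Fin.sum_univ_castSucc, Fin.lastCases_last, Fin.lastCases_castSucc]
      rw [Fintype.sum_sum_type, Fintype.sum_sum_type, Fintype.sum_sum_type,
        Fintype.sum_prod_type] at hs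
      simpa [Fintype.sum_prod_type, Finset.sum_add_distrib, add_comm, add_assoc,
        add_left_comm] using hs
    · intro j
      induction j using Fin.lastCases <;> simp
    · intro i
      induction i using Fin.lastCases <;> simp
    · rw [Fin.sum_univ_castSucc]
      simpa [Fintype.sum_sum_type] using hr
    · rw [Fin.sum_univ_castSucc]
      simpa using hc⟩
  left_inv A := by
    apply Subtype.ext
    funext i j
    obtain ⟨hs, hz1, hz2, hr, hc⟩ := A.2
    induction i using Fin.lastCases with
    | last =>
      induction j using Fin.lastCases with
      | last =>
        simp only [Fin.lastCases_last]
        exact Prod.ext rfl (hz1 (Fin.last q)).symm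
      | cast j' =>
        simp only [Fin.lastCases_last, Fin.lastCases_castSucc]
        exact Prod.ext rfl (hz1 j'.castSucc).symm
    | cast i' =>
      induction j using Fin.lastCases with
      | last =>
        simp only [Fin.lastCases_castSucc, Fin.lastCases_last]
        exact Prod.ext rfl (hz2 i'.castSucc).symm
      | cast j' => simp
  right_inv f := by
    apply Subtype.ext
    funext x
    rcases x with (⟨⟨i, j⟩, b⟩ | i) | (j | u)
    · cases b <;> simp
    · simp
    · simp
    · simp

/-- Collapsing the zero column-part in the `(1,1)` situation. -/
def collapse (n p q : ℕ) :
    {f : (((Fin p × Fin q) × Bool) ⊕ Fin p) ⊕ (Fin q ⊕ Unit) → ℕ //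
      ((∑ x, f x = n) ∧ 0 < ∑ y, f (Sum.inr y)) ∧
      ¬ 0 < (∑ i, f (Sum.inl (Sum.inr i))) + f (Sum.inr (Sum.inr ()))} ≃
    {g : ((Fin p × Fin q) × Bool) ⊕ Fin q → ℕ //
      (∑ x, g x = n) ∧ 0 < ∑ j, g (Sum.inr j)} where
  toFun f := by
    refine ⟨Sum.elim (fun a => f.1 (Sum.inl (Sum.inl a))) (fun j => f.1 (Sum.inr (Sum.inl j))),
      ?_, ?_⟩
    · obtain ⟨⟨hs, hr⟩, hz⟩ := f.2
      have h0 : (∑ i, f.1 (Sum.inl (Sum.inr i))) + f.1 (Sum.inr (Sum.inr ())) = 0 :=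
        Nat.eq_zero_of_not_pos hz
      rw [Nat.add_eq_zero] at h0
      rw [Fintype.sum_sum_type, Fintype.sum_sum_type, Fintype.sum_sum_type] at hs
      rw [Fintype.sum_sum_type]
      simp only [Sum.elim_inl, Sum.elim_inr]
      simpa [h0.1, h0.2] using hs
    · obtain ⟨⟨hs, hr⟩, hz⟩ := f.2
      have h0 : (∑ i, f.1 (Sum.inl (Sum.inr i))) + f.1 (Sum.inr (Sum.inr ())) = 0 :=
        Nat.eq_zero_of_not_pos hz
      rw [Nat.add_eq_zero] at h0
      rw [Fintype.sum_sum_type] at hr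
      simpa [h0.2] using hr
  invFun g := by
    refine ⟨Sum.elim (Sum.elim (fun a => g.1 (Sum.inl a)) (fun _ => 0))
      (Sum.elim (fun j => g.1 (Sum.inr j)) (fun _ => 0)), ⟨?_, ?_⟩, by simp⟩
    · obtain ⟨hs, hr⟩ := g.2
      rw [Fintype.sum_sum_type] at hs
      rw [Fintype.sum_sum_type, Fintype.sum_sum_type, Fintype.sum_sum_type]
      simpa using hs
    · obtain ⟨hs, hr⟩ := g.2
      rw [Fintype.sum_sum_type]
      simpa using hr
  left_inv f := by
    apply Subtype.ext
    obtain ⟨⟨hs, hr⟩, hz⟩ := f.2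
    have h0 : (∑ i, f.1 (Sum.inl (Sum.inr i))) + f.1 (Sum.inr (Sum.inr ())) = 0 :=
      Nat.eq_zero_of_not_pos hz
    rw [Nat.add_eq_zero] at h0
    funext x
    rcases x with (a | i) | (j | u)
    · rfl
    · simp only [Sum.elim_inl, Sum.elim_inr]
      exact (Finset.sum_eq_zero_iff.mp h0.1 i (Finset.mem_univ i)).symm
    · rfl
    · simp only [Sum.elim_inr]
      cases u
      exact h0.2.symm
  right_inv g := by
    apply Subtype.ext
    funext x
    rcases x with a | j <;> rfl

/-! ### Cardinality computations -/

lemma cardGSCM00 (n p q : ℕ) : Nat.card (GSCM00 n p q) = Nat.multichoose (2*p*q) n := by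
  rw [Nat.card_congr (e00 n p q), card_fs]
  congr 1
  simp [Fintype.card_prod]
  ring

lemma cardGSCM10 (n p q : ℕ) :
    Nat.card (GSCM10 n p q) + Nat.multichoose (2*p*q) n = Nat.multichoose (2*p*q+q) n := by
  have h := card_pos_part ((Fin p × Fin q) × Bool) (Fin q) n
  have hc : Fintype.card ((Fin p × Fin q) × Bool) = 2*p*q := by
    simp [Fintype.card_prod]; ring
  rw [hc, Fintype.card_fin] at h
  rw [Nat.card_congr (e10 n p q)]
  exact h

lemma cardGSCM01 (n p q : ℕ) :
    Nat.card (GSCM01 n p q) + Nat.multichoose (2*p*q) n = Nat.multichoose (2*p*q+p) n := by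
  have h := cardGSCM10 n q p
  rw [Nat.card_congr (e01 n p q)]
  rw [show 2*q*p = 2*p*q by ring] at h
  exact h

lemma cardGSCM11 (n p q : ℕ) :
    Nat.card (GSCM11 n p q) + Nat.multichoose (2*p*q+p) n + Nat.multichoose (2*p*q+q) n
      = Nat.multichoose (2*p*q+p+q+1) n + Nat.multichoose (2*p*q) n := by
  classical
  haveI := finite_fs ((((Fin p × Fin q) × Bool) ⊕ Fin p) ⊕ (Fin q ⊕ Unit)) n
  haveI : Finite {f : (((Fin p × Fin q) × Bool) ⊕ Fin p) ⊕ (Fin q ⊕ Unit) → ℕ //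
      (∑ x, f x = n) ∧ 0 < ∑ y, f (Sum.inr y)} :=
    Finite.of_injective
      (fun y => (⟨y.1, y.2.1⟩ :
        {f : (((Fin p × Fin q) × Bool) ⊕ Fin p) ⊕ (Fin q ⊕ Unit) → ℕ // ∑ x, f x = n}))
      (fun a b h => by simpa [Subtype.ext_iff] using h)
  -- step 1 : remove the row-positivity condition
  have h1 := card_pos_part (((Fin p × Fin q) × Bool) ⊕ Fin p) (Fin q ⊕ Unit) n
  have hc1 : Fintype.card (((Fin p × Fin q) × Bool) ⊕ Fin p) = 2*p*q+p := by
    simp [Fintype.card_sum, Fintype.card_prod]; ring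
  have hc2 : Fintype.card (Fin q ⊕ Unit) = q+1 := by simp
  rw [hc1, hc2] at h1
  -- step 2 : split along the column-positivity condition
  have h2 := card_split
    (fun f : (((Fin p × Fin q) × Bool) ⊕ Fin p) ⊕ (Fin q ⊕ Unit) → ℕ =>
      (∑ x, f x = n) ∧ 0 < ∑ y, f (Sum.inr y))
    (fun f => 0 < (∑ i, f (Sum.inl (Sum.inr i))) + f (Sum.inr (Sum.inr ())))
  -- identify the pieces
  have h3 : Nat.card {f : (((Fin p × Fin q) × Bool) ⊕ Fin p) ⊕ (Fin q ⊕ Unit) → ℕ //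
      ((∑ x, f x = n) ∧ 0 < ∑ y, f (Sum.inr y)) ∧
      0 < (∑ i, f (Sum.inl (Sum.inr i))) + f (Sum.inr (Sum.inr ()))}
      = Nat.card (GSCM11 n p q) :=
    Nat.card_congr ((Equiv.subtypeEquivRight (fun f => and_assoc)).trans (e11 n p q).symm)
  have h4 : Nat.card {f : (((Fin p × Fin q) × Bool) ⊕ Fin p) ⊕ (Fin q ⊕ Unit) → ℕ //
      ((∑ x, f x = n) ∧ 0 < ∑ y, f (Sum.inr y)) ∧
      ¬ 0 < (∑ i, f (Sum.inl (Sum.inr i))) + f (Sum.inr (Sum.inr ()))}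
      + Nat.multichoose (2*p*q) n = Nat.multichoose (2*p*q+q) n := by
    rw [Nat.card_congr (collapse n p q)]
    have h := card_pos_part ((Fin p × Fin q) × Bool) (Fin q) n
    have hc : Fintype.card ((Fin p × Fin q) × Bool) = 2*p*q := by
      simp [Fintype.card_prod]; ring
    rw [hc, Fintype.card_fin] at h
    exact h
  rw [h3] at h2
  rw [h2] at h1
  have harg : 2*p*q+p+(q+1) = 2*p*q+p+q+1 := by ring
  rw [harg] at h1
  -- now pure arithmetic
  generalize hA : Nat.card (GSCM11 n p q) = a at *
  generalize hC : Nat.card {f : (((Fin p × Fin q) × Bool) ⊕ Fin p) ⊕ (Fin q ⊕ Unit) → ℕ //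
      (∑ x, f x = n) ∧ 0 < ∑ y, f (Sum.inr y)} = c at h1 h2
  generalize hB : Nat.card {f : (((Fin p × Fin q) × Bool) ⊕ Fin p) ⊕ (Fin q ⊕ Unit) → ℕ //
      ((∑ x, f x = n) ∧ 0 < ∑ y, f (Sum.inr y)) ∧
      ¬ 0 < (∑ i, f (Sum.inl (Sum.inr i))) + f (Sum.inr (Sum.inr ()))} = b at h1 h2 h4
  clear hA hB hC h3
  omega

/-! ### The product formula -/

lemma fact_mul_choose (M n : ℕ) :
    n.factorial * (M+n).choose n = ∏ i ∈ Finset.Icc 1 n, (M+i) := by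
  induction n with
  | zero => simp
  | succ n ih =>
    rw [Finset.prod_Icc_succ_top (by omega : 1 ≤ n+1), ← ih]
    have h := Nat.add_one_mul_choose_eq (M+n) n
    have h' : (n+1) * (M+n+1).choose (n+1) = (M+n+1) * (M+n).choose n :=
      (mul_comm _ _).trans h.symm
    calc (n+1).factorial * (M+(n+1)).choose (n+1)
        = n.factorial * ((n+1) * (M+n+1).choose (n+1)) := by
          rw [Nat.factorial_succ]; ring
      _ = n.factorial * ((M+n+1) * (M+n).choose n) := by rw [h']
      _ = n.factorial * (M+n).choose n * (M+(n+1)) := by ring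

/-- `n! · |GSCM_n(p,q)| = ∏_{i=1}^n (2pq + p + q + i)`. -/
theorem factorial_mul_card_GSCM (n p q : ℕ) (hp : 1 ≤ p) (hq : 1 ≤ q) :
    n.factorial * GSCMcard n p q = ∏ i ∈ Finset.Icc 1 n, (2 * p * q + p + q + i) := by
  have h00 := cardGSCM00 n p q
  have h10 := cardGSCM10 n p q
  have h01 := cardGSCM01 n p q
  have h11 := cardGSCM11 n p q
  have hcard : GSCMcard n p q = Nat.multichoose (2*p*q+p+q+1) n := by
    unfold GSCMcard
    generalize hA : Nat.card (GSCM00 n p q) = a at *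
    generalize hB : Nat.card (GSCM10 n p q) = b at *
    generalize hC : Nat.card (GSCM01 n p q) = c at *
    generalize hD : Nat.card (GSCM11 n p q) = d at *
    omega
  rw [hcard]
  have hmc : Nat.multichoose (2*p*q+p+q+1) n = (2*p*q+p+q+n).choose n := by
    rw [Nat.multichoose_eq]
    congr 1
    omega
  rw [hmc]
  exact fact_mul_choose (2*p*q+p+q) n
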